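/- Every hyperideal J of S⁻¹R is extended: setting B = { r ∈ R : ∃ s ∈ S, r/s ∈ J }, B is a hyperideal of R and S⁻¹B = J. -/
import Mathlib


universe u v

/-- Extension of a set-valued `m`-ary hyperoperation to sets of arguments. -/
def setExt {α : Type u} (f : (ℕ → α) → Set α) (A : ℕ → Set α) : Set α :=
  {r | ∃ x : ℕ → α, (∀ i, x i ∈ A i) ∧ r ∈ f x}

/-- A commutative Krasner `(m,n)`-hyperring with scalar identity `one` and
absorbing element `zero`.  The `m`-ary hyperoperation `f` and the `n`-ary
operation `g` are encoded as functions on `ℕ`-indexed families which only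
depend on the first `m` (resp. `n`) entries. -/
structure KrasnerHyperring (R : Type u) (m n : ℕ) where
  f : (ℕ → R) → Set R
  g : (ℕ → R) → R
  zero : R
  one : R
  neg : R → R
  hm : 2 ≤ m
  hn : 2 ≤ n
  f_congr : ∀ x y : ℕ → R, (∀ i, i < m → x i = y i) → f x = f y
  g_congr : ∀ x y : ℕ → R, (∀ i, i < n → x i = y i) → g x = g y
  f_comm : ∀ (x : ℕ → R) (σ : Equiv.Perm ℕ), (∀ i, m ≤ i → σ i = i) → f (x ∘ σ) = f x
  g_comm : ∀ (x : ℕ → R) (σ : Equiv.Perm ℕ), (∀ i, n ≤ i → σ i = i) → g (x ∘ σ) = g x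
  f_nonempty : ∀ x, (f x).Nonempty
  f_assoc : ∀ (z : ℕ → R) (i j : ℕ), i < m → j < m →
    setExt f (fun k => if k < i then {z k} else if k = i then f (fun l => z (i + l)) else {z (k + m - 1)}) =
    setExt f (fun k => if k < j then {z k} else if k = j then f (fun l => z (j + l)) else {z (k + m - 1)})
  g_assoc : ∀ (z : ℕ → R) (i j : ℕ), i < n → j < n →
    g (fun k => if k < i then z k else if k = i then g (fun l => z (i + l)) else z (k + n - 1)) =
    g (fun k => if k < j then z k else if k = j then g (fun l => z (j + l)) else z (k + n - 1))
  distrib : ∀ (x a : ℕ → R),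
    {r | ∃ u ∈ f x, r = g (fun j => if j = 0 then u else a j)} =
    f (fun k => g (fun j => if j = 0 then x k else a j))
  f_zero : ∀ x : R, f (fun i => if i = 0 then x else zero) = {x}
  g_one : ∀ x : R, g (fun i => if i = 0 then x else one) = x
  g_zero : ∀ (x : ℕ → R) (i : ℕ), i < n → x i = zero → g x = zero
  neg_mem : ∀ x : R, zero ∈ f (fun i => if i = 0 then x else if i = 1 then neg x else zero)
  neg_unique : ∀ x y : R, zero ∈ f (fun i => if i = 0 then x else if i = 1 then y else zero) → y = neg x
  canonical : ∀ (a : R) (y : ℕ → R), a ∈ f y → ∀ i, i < m →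
    y i ∈ f (fun j => if j = i then a else neg (y j))

namespace KrasnerHyperring

variable {R : Type u} {m n : ℕ}

/-- `g(a, b, 1^(n-2))`. -/
def g2 (H : KrasnerHyperring R m n) (a b : R) : R :=
  H.g (fun i => if i = 0 then a else if i = 1 then b else H.one)

/-- `S` is an `n`-ary multiplicative subset. -/
def IsMultSubset (H : KrasnerHyperring R m n) (S : Set R) : Prop :=
  ∀ s : ℕ → R, (∀ i, i < n → s i ∈ S) → H.g s ∈ S

/-- The set `f(g(r,s',1^(n-2)), -g(r',s,1^(n-2)), 0^(m-2))`. -/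
def fracMix (H : KrasnerHyperring R m n) (r s' r' s : R) : Set R :=
  H.f (fun i => if i = 0 then H.g2 r s' else if i = 1 then H.neg (H.g2 r' s) else H.zero)

/-- The fraction relation on `R × S`:
`(r,s) ∼ (r',s')` iff `0 ∈ g(t, f(g(r,s',1^(n-2)), -g(r',s,1^(n-2)), 0^(m-2)), 1^(n-2))`
for some `t ∈ S`. -/
def FracRel (H : KrasnerHyperring R m n) (S : Set R) (p q : R × S) : Prop :=
  ∃ t ∈ S, ∃ u ∈ H.fracMix p.1 (q.2 : R) q.1 (p.2 : R), H.g2 t u = H.zero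

/-- The hyperring of fractions `S⁻¹R` as a quotient of `R × S`. -/
def Frac (H : KrasnerHyperring R m n) (S : Set R) : Type u :=
  Quot (H.FracRel S)

/-- The fraction `r/s`. -/
def mkFrac (H : KrasnerHyperring R m n) (S : Set R) (r s : R) (hs : s ∈ S) : Frac H S :=
  Quot.mk _ (r, ⟨s, hs⟩)

/-- The zero fraction `0/1`. -/
def zeroFrac (H : KrasnerHyperring R m n) {S : Set R} (h1 : H.one ∈ S) : Frac H S :=
  H.mkFrac S H.zero H.one h1

/-- The unit fraction `1/1`. -/
def oneFrac (H : KrasnerHyperring R m n) {S : Set R} (h1 : H.one ∈ S) : Frac H S :=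
  H.mkFrac S H.one H.one h1

/-- The natural map `φ : R → S⁻¹R`, `r ↦ r/1`. -/
def natMap (H : KrasnerHyperring R m n) {S : Set R} (h1 : H.one ∈ S) (r : R) : Frac H S :=
  H.mkFrac S r H.one h1

/-- The `n`-ary multiplication on `S⁻¹R`:
`G(r_1/s_1, ..., r_n/s_n) = g(r_1,...,r_n)/g(s_1,...,s_n)`. -/
noncomputable def fracG (H : KrasnerHyperring R m n) {S : Set R} (hS : H.IsMultSubset S)
    (x : ℕ → Frac H S) : Frac H S :=
  H.mkFrac S (H.g (fun i => ((x i).out).1)) (H.g (fun i => (((x i).out).2 : R)))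
    (hS _ (fun i _ => ((x i).out).2.property))

/-- The denominator `g(s_1,...,s_m,1^(n-m))` of the `m`-ary hypersum. -/
noncomputable def denomF (H : KrasnerHyperring R m n) {S : Set R} (x : ℕ → Frac H S) : R :=
  H.g (fun j => if j < m then (((x j).out).2 : R) else H.one)

theorem denomF_mem (H : KrasnerHyperring R m n) {S : Set R} (hS : H.IsMultSubset S)
    (h1 : H.one ∈ S) (x : ℕ → Frac H S) : H.denomF x ∈ S := by
  refine hS _ (fun j _ => ?_)
  by_cases h : j < m <;> simp only [h, if_true, if_false]
  · exact ((x j).out).2.property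
  · exact h1

/-- The `m`-ary hyperaddition on `S⁻¹R`:
`F(r_1/s_1,...,r_m/s_m) = f(g(r_1,s_2,...,s_m,1^(n-m)),...,g(s_1,...,s_{m-1},r_m,1^(n-m))) / g(s_1,...,s_m,1^(n-m))`. -/
noncomputable def fracF (H : KrasnerHyperring R m n) {S : Set R} (hS : H.IsMultSubset S)
    (h1 : H.one ∈ S) (x : ℕ → Frac H S) : Set (Frac H S) :=
  {q | ∃ u ∈ H.f (fun k => H.g (fun j =>
      if j = k then ((x k).out).1 else if j < m then (((x j).out).2 : R) else H.one)),
    q = H.mkFrac S u (H.denomF x) (H.denomF_mem hS h1 x)}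

/-- The negative of a fraction. -/
noncomputable def fracNeg (H : KrasnerHyperring R m n) {S : Set R} (q : Frac H S) : Frac H S :=
  H.mkFrac S (H.neg q.out.1) (q.out.2 : R) q.out.2.property

/-- Hyperideals of a Krasner `(m,n)`-hyperring. -/
def IsHyperideal (H : KrasnerHyperring R m n) (I : Set R) : Prop :=
  H.zero ∈ I ∧ (∀ x : ℕ → R, (∀ i, i < m → x i ∈ I) → H.f x ⊆ I) ∧
    (∀ a ∈ I, H.neg a ∈ I) ∧
    (∀ (x : ℕ → R) (i : ℕ), i < n → x i ∈ I → H.g x ∈ I)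

/-- The localization `S⁻¹I = {a/s : a ∈ I, s ∈ S}` of a hyperideal. -/
def locIdeal (H : KrasnerHyperring R m n) (S I : Set R) : Set (Frac H S) :=
  {q | ∃ a ∈ I, ∃ s, ∃ hs : s ∈ S, q = H.mkFrac S a s hs}

/-- `n`-ary prime hyperideals. -/
def IsPrimeHyperideal (H : KrasnerHyperring R m n) (P : Set R) : Prop :=
  H.IsHyperideal P ∧ P ≠ Set.univ ∧ ∀ x : ℕ → R, H.g x ∈ P → ∃ i, i < n ∧ x i ∈ P

/-- The radical of a hyperideal: the intersection of all `n`-ary prime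
hyperideals containing it (`R` if there are none). -/
def radical (H : KrasnerHyperring R m n) (I : Set R) : Set R :=
  ⋂₀ {P | H.IsPrimeHyperideal P ∧ I ⊆ P}

/-- `n`-ary primary hyperideals. -/
def IsPrimaryHyperideal (H : KrasnerHyperring R m n) (Q : Set R) : Prop :=
  H.IsHyperideal Q ∧ Q ≠ Set.univ ∧
    ∀ x : ℕ → R, H.g x ∈ Q → ∀ i, i < n → x i ∉ Q →
      H.g (Function.update x i H.one) ∈ H.radical Q

/-- `n`-ary hyperintegral domains. -/
def IsHyperDomain (H : KrasnerHyperring R m n) : Prop :=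
  ∀ x : ℕ → R, H.g x = H.zero → ∃ i, i < n ∧ x i = H.zero

/-- Hyperideals of the hyperring of fractions `S⁻¹R`. -/
def IsFracHyperideal (H : KrasnerHyperring R m n) {S : Set R} (hS : H.IsMultSubset S)
    (h1 : H.one ∈ S) (J : Set (Frac H S)) : Prop :=
  H.zeroFrac h1 ∈ J ∧ (∀ x : ℕ → Frac H S, (∀ i, i < m → x i ∈ J) → H.fracF hS h1 x ⊆ J) ∧
    (∀ q ∈ J, H.fracNeg q ∈ J) ∧
    (∀ (x : ℕ → Frac H S) (i : ℕ), i < n → x i ∈ J → H.fracG hS x ∈ J)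

/-- `n`-ary prime hyperideals of `S⁻¹R`. -/
def IsFracPrime (H : KrasnerHyperring R m n) {S : Set R} (hS : H.IsMultSubset S)
    (h1 : H.one ∈ S) (P : Set (Frac H S)) : Prop :=
  H.IsFracHyperideal hS h1 P ∧ P ≠ Set.univ ∧
    ∀ x : ℕ → Frac H S, H.fracG hS x ∈ P → ∃ i, i < n ∧ x i ∈ P

/-- Maximal hyperideals of `S⁻¹R`. -/
def IsFracMaximal (H : KrasnerHyperring R m n) {S : Set R} (hS : H.IsMultSubset S)
    (h1 : H.one ∈ S) (M : Set (Frac H S)) : Prop :=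
  H.IsFracHyperideal hS h1 M ∧ M ≠ Set.univ ∧
    ∀ J : Set (Frac H S), H.IsFracHyperideal hS h1 J → M ⊆ J → J = M ∨ J = Set.univ

/-- The radical of a hyperideal of `S⁻¹R`. -/
def fracRadical (H : KrasnerHyperring R m n) {S : Set R} (hS : H.IsMultSubset S)
    (h1 : H.one ∈ S) (J : Set (Frac H S)) : Set (Frac H S) :=
  ⋂₀ {P | H.IsFracPrime hS h1 P ∧ J ⊆ P}

/-- `n`-ary primary hyperideals of `S⁻¹R`. -/
def IsFracPrimary (H : KrasnerHyperring R m n) {S : Set R} (hS : H.IsMultSubset S)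
    (h1 : H.one ∈ S) (Q : Set (Frac H S)) : Prop :=
  H.IsFracHyperideal hS h1 Q ∧ Q ≠ Set.univ ∧
    ∀ x : ℕ → Frac H S, H.fracG hS x ∈ Q → ∀ i, i < n → x i ∉ Q →
      H.fracG hS (Function.update x i (H.oneFrac h1)) ∈ H.fracRadical hS h1 Q

/-- Homomorphisms of Krasner `(m,n)`-hyperrings. -/
def IsHom {R2 : Type v} (H : KrasnerHyperring R m n) (H2 : KrasnerHyperring R2 m n)
    (k : R → R2) : Prop :=
  (∀ x : ℕ → R, k '' (H.f x) = H2.f (k ∘ x)) ∧ (∀ x : ℕ → R, k (H.g x) = H2.g (k ∘ x))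

/-- Homomorphisms from `S⁻¹R` to a Krasner `(m,n)`-hyperring. -/
def IsFracHom {R2 : Type v} (H : KrasnerHyperring R m n) {S : Set R} (hS : H.IsMultSubset S)
    (h1 : H.one ∈ S) (H2 : KrasnerHyperring R2 m n) (h : Frac H S → R2) : Prop :=
  (∀ x : ℕ → Frac H S, h '' (H.fracF hS h1 x) = H2.f (h ∘ x)) ∧
    (∀ x : ℕ → Frac H S, h (H.fracG hS x) = H2.g (h ∘ x))

/-- The coset `f(r, I, 0^(m-2))` in the quotient `R/I`. -/
def quotCoset (H : KrasnerHyperring R m n) (I : Set R) (r : R) : Set R :=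
  setExt H.f (fun i => if i = 0 then {r} else if i = 1 then I else {H.zero})

end KrasnerHyperring
namespace KrasnerHyperring

variable {R : Type u} {m n : ℕ}

lemma hn0 (H : KrasnerHyperring R m n) : 0 < n := by have := H.hn; omega
lemma hn1 (H : KrasnerHyperring R m n) : 1 < n := by have := H.hn; omega
lemma hm0 (H : KrasnerHyperring R m n) : 0 < m := by have := H.hm; omega
lemma hm1 (H : KrasnerHyperring R m n) : 1 < m := by have := H.hm; omega

variable (H : KrasnerHyperring R m n)

lemma g_ext {x y : ℕ → R} (h : ∀ i, i < n → x i = y i) : H.g x = H.g y := H.g_congr x y h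
lemma f_ext {x y : ℕ → R} (h : ∀ i, i < m → x i = y i) : H.f x = H.f y := H.f_congr x y h

lemma g_ones : H.g (fun _ => H.one) = H.one :=
  (H.g_ext (fun i _ => by by_cases h : i = 0 <;> simp [h])).trans (H.g_one H.one)

lemma g2_one_right (a : R) : H.g2 a H.one = a :=
  (H.g_ext (fun i _ => by by_cases h : i = 0 <;> by_cases h1 : i = 1 <;> simp [h, h1])).trans
    (H.g_one a)

lemma g2_comm (a b : R) : H.g2 a b = H.g2 b a := by
  have hn := H.hn
  have hfix : ∀ i, n ≤ i → (Equiv.swap 0 1) i = i := by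
    intro i hi
    exact Equiv.swap_apply_of_ne_of_ne (by omega) (by omega)
  refine Eq.trans ?_ (H.g_comm (fun i => if i = 0 then b else if i = 1 then a else H.one)
    (Equiv.swap 0 1) hfix)
  apply H.g_ext
  intro i _
  simp only [Function.comp]
  by_cases h0 : i = 0
  · subst h0; simp [Equiv.swap_apply_left]
  · by_cases h1 : i = 1
    · subst h1; simp [Equiv.swap_apply_right]
    · rw [Equiv.swap_apply_of_ne_of_ne h0 h1]
      split_ifs <;> first | rfl | exact False.elim (by assumption) | omega | simp_all

lemma g2_one_left (a : R) : H.g2 H.one a = a := by rw [H.g2_comm, H.g2_one_right]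

lemma g2_assoc (a b c : R) : H.g2 (H.g2 a b) c = H.g2 a (H.g2 b c) := by
  have hn := H.hn
  set z : ℕ → R := fun k => if k = 0 then a else if k = 1 then b else if k = n then c else H.one
    with hz
  have hinner0 : H.g (fun l => z (0 + l)) = H.g2 a b := by
    apply H.g_ext
    intro l hl
    simp only [hz, Nat.zero_add, g2]
    split_ifs <;> first | rfl | exact False.elim (by assumption) | omega | simp_all
  have hinner1 : H.g (fun l => z (1 + l)) = H.g2 b c := by
    have hfix : ∀ i, n ≤ i → (Equiv.swap 1 (n-1)) i = i := by
      intro i hi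
      exact Equiv.swap_apply_of_ne_of_ne (by omega) (by omega)
    refine Eq.trans ?_ (H.g_comm (fun i => if i = 0 then b else if i = 1 then c else H.one)
      (Equiv.swap 1 (n-1)) hfix)
    apply H.g_ext
    intro l hl
    simp only [Function.comp, hz]
    by_cases hl1 : l = 1
    · subst hl1
      rw [Equiv.swap_apply_left]
      split_ifs <;> first | rfl | exact False.elim (by assumption) | omega | simp_all
    · by_cases hln : l = n - 1
      · subst hln
        rw [Equiv.swap_apply_right]
        split_ifs <;> first | rfl | exact False.elim (by assumption) | omega | simp_all
      · rw [Equiv.swap_apply_of_ne_of_ne hl1 hln]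
        split_ifs <;> first | rfl | exact False.elim (by assumption) | omega | simp_all
  have h := H.g_assoc z 0 1 H.hn0 H.hn1
  have hL : H.g (fun k => if k < 0 then z k else if k = 0 then H.g (fun l => z (0 + l))
      else z (k + n - 1)) = H.g2 (H.g2 a b) c := by
    apply H.g_ext
    intro i hi
    by_cases h0 : i = 0
    · subst h0
      simp only [Nat.lt_irrefl, if_false, if_pos rfl, hinner0, g2]
      split_ifs <;> first | rfl | exact False.elim (by assumption) | omega | simp_all
    · rw [if_neg (by omega : ¬ i < 0), if_neg h0]
      simp only [hz, g2]
      split_ifs <;> first | rfl | exact False.elim (by assumption) | omega | simp_all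
  have hR : H.g (fun k => if k < 1 then z k else if k = 1 then H.g (fun l => z (1 + l))
      else z (k + n - 1)) = H.g2 a (H.g2 b c) := by
    apply H.g_ext
    intro i hi
    by_cases h1 : i = 1
    · subst h1
      rw [if_neg (by omega : ¬ (1:ℕ) < 1), if_pos rfl, hinner1]
      simp only [g2]
      split_ifs <;> first | rfl | exact False.elim (by assumption) | omega | simp_all
    · by_cases h0 : i = 0
      · subst h0
        rw [if_pos (by omega : (0:ℕ) < 1)]
        simp only [hz, g2]
        split_ifs <;> first | rfl | exact False.elim (by assumption) | omega | simp_all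
      · rw [if_neg (by omega : ¬ i < 1), if_neg h1]
        simp only [hz, g2]
        split_ifs <;> first | rfl | exact False.elim (by assumption) | omega | simp_all
  rw [← hL, ← hR]
  exact h

noncomputable def cm : CommMonoid R where
  mul := H.g2
  one := H.one
  mul_assoc := H.g2_assoc
  one_mul := H.g2_one_left
  mul_one := H.g2_one_right
  mul_comm := H.g2_comm

end KrasnerHyperring
namespace KrasnerHyperring

variable {R : Type u} {m n : ℕ} (H : KrasnerHyperring R m n)

lemma g_peel (x : ℕ → R) :
    H.g x = H.g2 (x 0) (H.g (fun i => if i < n - 1 then x (i + 1) else H.one)) := by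
  have hn := H.hn
  set z : ℕ → R := fun k => if k < n then x k else H.one with hz
  have h := H.g_assoc z 0 1 H.hn0 H.hn1
  have hinner : H.g (fun l => z (0 + l)) = H.g x := by
    apply H.g_ext
    intro l hl
    simp only [hz, Nat.zero_add, if_pos hl]
  have hinner1 : H.g (fun l => z (1 + l)) = H.g (fun i => if i < n - 1 then x (i + 1) else H.one) := by
    apply H.g_ext
    intro l hl
    simp only [hz]
    by_cases hc : l < n - 1
    · rw [if_pos (by omega : 1 + l < n), if_pos hc, Nat.add_comm 1 l]
    · rw [if_neg (by omega : ¬ 1 + l < n), if_neg hc]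
  have hL : H.g (fun k => if k < 0 then z k else if k = 0 then H.g (fun l => z (0 + l))
      else z (k + n - 1)) = H.g x := by
    refine Eq.trans ?_ (H.g_one (H.g x))
    apply H.g_ext
    intro i hi
    by_cases h0 : i = 0
    · subst h0; simpa using hinner
    · simp only [hz]
      split_ifs <;> first | rfl | exact False.elim (by assumption) | omega | simp_all
  have hR : H.g (fun k => if k < 1 then z k else if k = 1 then H.g (fun l => z (1 + l))
      else z (k + n - 1)) = H.g2 (x 0) (H.g (fun i => if i < n - 1 then x (i + 1) else H.one)) := by
    apply H.g_ext
    intro i hi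
    beta_reduce
    by_cases h1 : i = 1
    · subst h1; simpa using hinner1
    · simp only [hz]
      split_ifs <;> first | rfl | exact False.elim (by assumption) | omega | simp_all
  rw [← hL, ← hR]
  exact h

noncomputable def gpr : (ℕ → R) → ℕ → R
  | _, 0 => H.one
  | x, (k+1) => H.g2 (x 0) (gpr (fun i => x (i + 1)) k)

lemma gpr_congr : ∀ (k : ℕ) (x y : ℕ → R), (∀ i, i < k → x i = y i) →
    H.gpr x k = H.gpr y k := by
  intro k
  induction k with
  | zero => intro x y _; rfl
  | succ k ih =>
    intro x y h
    simp only [gpr]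
    rw [h 0 (by omega), ih (fun i => x (i+1)) (fun i => y (i+1)) (fun i hi => h (i+1) (by omega))]

lemma gpr_ones : ∀ k, H.gpr (fun _ => H.one) k = H.one := by
  intro k
  induction k with
  | zero => rfl
  | succ k ih => simp only [gpr]; rw [ih, H.g2_one_right]

lemma gpr_mul : ∀ (k : ℕ) (x y : ℕ → R),
    H.gpr (fun i => H.g2 (x i) (y i)) k = H.g2 (H.gpr x k) (H.gpr y k) := by
  intro k
  induction k with
  | zero => intro x y; simp only [gpr]; rw [H.g2_one_right]
  | succ k ih =>
    intro x y
    simp only [gpr]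
    rw [ih (fun i => x (i+1)) (fun i => y (i+1))]
    letI : CommMonoid R := H.cm
    exact mul_mul_mul_comm (x 0) (y 0) (H.gpr (fun i => x (i+1)) k) (H.gpr (fun i => y (i+1)) k)

lemma gpr_single : ∀ (k j : ℕ) (v : R),
    H.gpr (fun i => if i = j then v else H.one) k = if j < k then v else H.one := by
  intro k
  induction k with
  | zero => intro j v; simp only [gpr]; rw [if_neg (by omega : ¬ j < 0)]
  | succ k ih =>
    intro j v
    simp only [gpr]
    rcases j with _ | j
    · rw [if_pos rfl, if_pos (by omega : 0 < k + 1)]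
      have he : (fun i => if i + 1 = 0 then v else H.one) = (fun _ : ℕ => H.one) := by
        funext i; rw [if_neg (by omega : ¬ i + 1 = 0)]
      rw [he, H.gpr_ones, H.g2_one_right]
    · rw [if_neg (by omega : ¬ (0:ℕ) = j + 1)]
      have he : (fun i => if i + 1 = j + 1 then v else H.one)
          = (fun i => if i = j then v else H.one) := by
        funext i
        by_cases h : i = j
        · rw [if_pos (by omega), if_pos h]
        · rw [if_neg (by omega), if_neg h]
      rw [he, ih j v, H.g2_one_left]
      by_cases h : j < k
      · rw [if_pos h, if_pos (by omega)]
      · rw [if_neg h, if_neg (by omega)]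

lemma g_eq_gpr (x : ℕ → R) : H.g x = H.gpr x n := by
  have main : ∀ (k : ℕ), k ≤ n → ∀ x : ℕ → R,
      H.g (fun i => if i < k then x i else H.one) = H.gpr x k := by
    intro k
    induction k with
    | zero =>
      intro _ x
      refine Eq.trans ?_ H.g_ones
      exact H.g_ext (fun i _ => by rw [if_neg (by omega : ¬ i < 0)])
    | succ k ih =>
      intro hk x
      rw [H.g_peel]
      simp only [gpr]
      rw [if_pos (by omega : 0 < k + 1)]
      congr 1
      refine Eq.trans (H.g_ext (fun i hi => ?_)) (ih (by omega) (fun i => x (i+1)))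
      by_cases hc : i < k
      · rw [if_pos (by omega : i < n - 1), if_pos (by omega : i + 1 < k + 1), if_pos hc]
      · by_cases hd : i < n - 1
        · rw [if_pos hd, if_neg (by omega : ¬ i + 1 < k + 1), if_neg hc]
        · rw [if_neg hd, if_neg hc]
  refine Eq.trans (H.g_ext (fun i hi => ?_)) (main n le_rfl x)
  rw [if_pos hi]

lemma g_single (k : ℕ) (v : R) :
    H.g (fun i => if i = k then v else H.one) = if k < n then v else H.one := by
  rw [H.g_eq_gpr, H.gpr_single]

lemma g2_mem {S : Set R} (hS : H.IsMultSubset S) (h1 : H.one ∈ S) {a b : R}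
    (ha : a ∈ S) (hb : b ∈ S) : H.g2 a b ∈ S := by
  refine hS _ (fun i _ => ?_)
  by_cases h : i = 0
  · rw [if_pos h]; exact ha
  · rw [if_neg h]
    by_cases h' : i = 1
    · rw [if_pos h']; exact hb
    · rw [if_neg h']; exact h1

lemma gpr_mem {S : Set R} (hS : H.IsMultSubset S) (h1 : H.one ∈ S) :
    ∀ (k : ℕ) (x : ℕ → R), (∀ i, i < k → x i ∈ S) → H.gpr x k ∈ S := by
  intro k
  induction k with
  | zero => intro x _; exact h1
  | succ k ih =>
    intro x h
    exact H.g2_mem hS h1 (h 0 (by omega)) (ih _ (fun i hi => h (i+1) (by omega)))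

end KrasnerHyperring
namespace KrasnerHyperring

variable {R : Type u} {m n : ℕ} (H : KrasnerHyperring R m n)

/-- Binary hyperaddition. -/
def f2 (a b : R) : Set R :=
  H.f (fun i => if i = 0 then a else if i = 1 then b else H.zero)

lemma neg_mem2 (x : R) : H.zero ∈ H.f2 x (H.neg x) := H.neg_mem x

lemma neg_unique2 {x y : R} (h : H.zero ∈ H.f2 x y) : y = H.neg x := H.neg_unique x y h

lemma f2_nonempty (a b : R) : (H.f2 a b).Nonempty := H.f_nonempty _

lemma f2_comm (a b : R) : H.f2 a b = H.f2 b a := by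
  have hm := H.hm
  have hfix : ∀ i, m ≤ i → (Equiv.swap 0 1) i = i := by
    intro i hi
    exact Equiv.swap_apply_of_ne_of_ne (by omega) (by omega)
  refine Eq.trans ?_ (H.f_comm (fun i => if i = 0 then b else if i = 1 then a else H.zero)
    (Equiv.swap 0 1) hfix)
  apply H.f_ext
  intro i _
  simp only [Function.comp]
  by_cases h0 : i = 0
  · subst h0; simp [Equiv.swap_apply_left]
  · by_cases h1 : i = 1
    · subst h1; simp [Equiv.swap_apply_right]
    · rw [Equiv.swap_apply_of_ne_of_ne h0 h1]
      split_ifs <;> first | rfl | omega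

lemma f2_zero_right (a : R) : H.f2 a H.zero = {a} := by
  refine Eq.trans ?_ (H.f_zero a)
  apply H.f_ext
  intro i _
  split_ifs <;> rfl

lemma f2_zero_left (a : R) : H.f2 H.zero a = {a} := by rw [H.f2_comm, H.f2_zero_right]

lemma neg_zero : H.neg H.zero = H.zero := by
  have h : H.zero ∈ H.f2 H.zero H.zero := by
    rw [H.f2_zero_right]; exact rfl
  exact (H.neg_unique2 h).symm

lemma neg_neg (x : R) : H.neg (H.neg x) = x := by
  have h : H.zero ∈ H.f2 (H.neg x) x := by
    rw [H.f2_comm]; exact H.neg_mem2 x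
  exact (H.neg_unique2 h).symm

/-- Reversibility. -/
lemma rev2 {x y z : R} (h : x ∈ H.f2 y z) : y ∈ H.f2 x (H.neg z) := by
  have hc := H.canonical x (fun i => if i = 0 then y else if i = 1 then z else H.zero) h 0 H.hm0
  simp only [if_pos rfl] at hc
  have he : H.f (fun j => if j = 0 then x
      else H.neg (if j = 0 then y else if j = 1 then z else H.zero))
      = H.f2 x (H.neg z) := by
    apply H.f_ext
    intro i _
    by_cases h0 : i = 0 <;> by_cases h1 : i = 1 <;> simp [h0, h1, H.neg_zero]
  rwa [he] at hc

/-- Scalar multiplication distributes over `f` (reformulation of `distrib`). -/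
lemma scal_set (x : ℕ → R) (c : R) :
    {r | ∃ u ∈ H.f x, r = H.g2 u c} = H.f (fun k => H.g2 (x k) c) :=
  H.distrib x (fun j => if j = 1 then c else H.one)

lemma g2_zero_left (c : R) : H.g2 H.zero c = H.zero :=
  H.g_zero _ 0 H.hn0 rfl

lemma g2_zero_right (c : R) : H.g2 c H.zero = H.zero :=
  H.g_zero _ 1 H.hn1 rfl

lemma f2_scal_mem {a b w : R} (hw : w ∈ H.f2 a b) (c : R) :
    H.g2 w c ∈ H.f2 (H.g2 a c) (H.g2 b c) := by
  have h1 : H.g2 w c ∈ {r | ∃ u ∈ H.f2 a b, r = H.g2 u c} := ⟨w, hw, rfl⟩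
  rw [f2, scal_set] at h1
  have he : H.f (fun k => H.g2 ((if k = 0 then a else if k = 1 then b else H.zero)) c)
      = H.f2 (H.g2 a c) (H.g2 b c) := by
    apply H.f_ext
    intro i _
    by_cases h0 : i = 0
    · rw [if_pos h0, if_pos h0]
    · rw [if_neg h0, if_neg h0]
      by_cases hb : i = 1
      · rw [if_pos hb, if_pos hb]
      · rw [if_neg hb, if_neg hb, H.g2_zero_left]
  rwa [he] at h1

lemma f2_scal_rev {a b v : R} (c : R) (hv : v ∈ H.f2 (H.g2 a c) (H.g2 b c)) :
    ∃ w ∈ H.f2 a b, v = H.g2 w c := by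
  have he : H.f (fun k => H.g2 ((if k = 0 then a else if k = 1 then b else H.zero)) c)
      = H.f2 (H.g2 a c) (H.g2 b c) := by
    apply H.f_ext
    intro i _
    by_cases h0 : i = 0
    · rw [if_pos h0, if_pos h0]
    · rw [if_neg h0, if_neg h0]
      by_cases hb : i = 1
      · rw [if_pos hb, if_pos hb]
      · rw [if_neg hb, if_neg hb, H.g2_zero_left]
  rw [← he, ← scal_set] at hv
  exact hv

lemma neg_g2 (u c : R) : H.g2 (H.neg u) c = H.neg (H.g2 u c) := by
  have h := H.f2_scal_mem (H.neg_mem2 u) c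
  rw [H.g2_zero_left] at h
  exact H.neg_unique2 h

end KrasnerHyperring
namespace KrasnerHyperring

variable {R : Type u} {m n : ℕ} (H : KrasnerHyperring R m n)

lemma setExt_eq (A : ℕ → Set R) (j : ℕ) (W : Set R) (w : ℕ → R)
    (hA : ∀ k, k ≠ j → A k = {w k}) (hAj : A j = W) :
    setExt H.f A = {v | ∃ u ∈ W, v ∈ H.f (Function.update w j u)} := by
  ext v
  constructor
  · rintro ⟨x, hx, hv⟩
    refine ⟨x j, hAj ▸ hx j, ?_⟩
    have hxw : x = Function.update w j (x j) := by
      funext k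
      by_cases hk : k = j
      · subst hk; rw [Function.update_self]
      · rw [Function.update_of_ne hk]
        have h2 := hx k
        rw [hA k hk] at h2
        exact h2
    rwa [← hxw]
  · rintro ⟨u, hu, hv⟩
    refine ⟨Function.update w j u, fun k => ?_, hv⟩
    by_cases hk : k = j
    · subst hk; rw [Function.update_self, hAj]; exact hu
    · rw [Function.update_of_ne hk, hA k hk]; exact rfl

lemma f_single {k : ℕ} (hk : k < m) (v : R) :
    H.f (fun i => if i = k then v else H.zero) = {v} := by
  have hm := H.hm
  by_cases h0 : k = 0
  · subst h0
    exact H.f_zero v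
  · have hfix : ∀ i, m ≤ i → (Equiv.swap 0 k) i = i := by
      intro i hi
      exact Equiv.swap_apply_of_ne_of_ne (by omega) (by omega)
    refine Eq.trans ?_ ((H.f_comm (fun i => if i = 0 then v else H.zero) (Equiv.swap 0 k)
      hfix).trans (H.f_zero v))
    apply H.f_ext
    intro i _
    simp only [Function.comp]
    by_cases hi0 : i = 0
    · subst hi0; rw [Equiv.swap_apply_left, if_neg (Ne.symm h0), if_neg h0]
    · by_cases hik : i = k
      · subst hik; rw [Equiv.swap_apply_right, if_pos rfl, if_pos rfl]
      · rw [Equiv.swap_apply_of_ne_of_ne hi0 hik, if_neg hik, if_neg hi0]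

lemma split_last (y : ℕ → R) :
    H.f y = {v | ∃ w ∈ H.f (fun i => if i = m - 1 then H.zero else y i),
      v ∈ H.f2 w (y (m - 1))} := by
  have hm := H.hm
  set z : ℕ → R := fun k => if k < m - 1 then y k
    else if k = 2*m - 2 then y (m-1) else H.zero with hz
  have h := H.f_assoc z (m-1) 0 (by omega) H.hm0
  -- side (m-1)
  have hA1 : ∀ k, k ≠ m - 1 →
      (if k < m - 1 then ({z k} : Set R) else if k = m - 1 then H.f (fun l => z (m - 1 + l))
        else {z (k + m - 1)}) = {(fun k => if k < m - 1 then y k else H.zero) k} := by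
    intro k hk
    beta_reduce
    by_cases h2 : k < m - 1
    · rw [if_pos h2, if_pos h2]
      congr 1
      simp only [hz]
      rw [if_pos h2]
    · rw [if_neg h2, if_neg hk, if_neg h2]
      congr 1
      simp only [hz]
      rw [if_neg (by omega : ¬ k + m - 1 < m - 1), if_neg (by omega : ¬ k + m - 1 = 2*m - 2)]
  have hAj1 : (if m - 1 < m - 1 then ({z (m-1)} : Set R)
      else if m - 1 = m - 1 then H.f (fun l => z (m - 1 + l)) else {z (m - 1 + m - 1)})
      = H.f (fun l => z (m - 1 + l)) := by
    rw [if_neg (by omega : ¬ m - 1 < m - 1), if_pos rfl]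
  have e1 := H.setExt_eq _ (m-1) _ (fun k => if k < m - 1 then y k else H.zero) hA1 hAj1
  have hW1 : H.f (fun l => z (m - 1 + l)) = {y (m-1)} := by
    refine Eq.trans ?_ (H.f_single (by omega : m - 1 < m) (y (m-1)))
    apply H.f_ext
    intro l hl
    simp only [hz]
    by_cases hlm : l = m - 1
    · subst hlm
      rw [if_pos rfl, if_neg (by omega : ¬ m - 1 + (m-1) < m - 1),
        if_pos (by omega : m - 1 + (m - 1) = 2*m - 2)]
    · rw [if_neg hlm, if_neg (by omega : ¬ m - 1 + l < m - 1),
        if_neg (by omega : ¬ m - 1 + l = 2*m - 2)]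
  have hupd1 : H.f (Function.update (fun k => if k < m - 1 then y k else H.zero) (m-1)
      (y (m-1))) = H.f y := by
    apply H.f_ext
    intro i hi
    by_cases hik : i = m - 1
    · subst hik; rw [Function.update_self]
    · rw [Function.update_of_ne hik, if_pos (by omega : i < m - 1)]
  have hside1 : setExt H.f (fun k => if k < m - 1 then {z k}
      else if k = m - 1 then H.f (fun l => z (m - 1 + l)) else {z (k + m - 1)}) = H.f y := by
    rw [e1, hW1]
    ext v
    simp only [Set.mem_setOf_eq, Set.mem_singleton_iff]
    constructor
    · rintro ⟨u, rfl, hv⟩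
      rwa [hupd1] at hv
    · intro hv
      exact ⟨y (m-1), rfl, by rwa [hupd1]⟩
  -- side 0
  have hA0 : ∀ k, k ≠ 0 →
      (if k < 0 then ({z k} : Set R) else if k = 0 then H.f (fun l => z (0 + l))
        else {z (k + m - 1)}) = {(fun k => if k = m - 1 then y (m-1) else H.zero) k} := by
    intro k hk
    beta_reduce
    rw [if_neg (by omega : ¬ k < 0), if_neg hk]
    congr 1
    simp only [hz]
    by_cases hkm : k = m - 1
    · subst hkm
      rw [if_neg (by omega : ¬ m - 1 + m - 1 < m - 1),
        if_pos (by omega : m - 1 + m - 1 = 2*m - 2), if_pos rfl]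
    · rw [if_neg (by omega : ¬ k + m - 1 < m - 1), if_neg (by omega : ¬ k + m - 1 = 2*m - 2),
        if_neg hkm]
  have hAj0 : (if (0:ℕ) < 0 then ({z 0} : Set R)
      else if (0:ℕ) = 0 then H.f (fun l => z (0 + l)) else {z (0 + m - 1)})
      = H.f (fun l => z (0 + l)) := by
    rw [if_neg (by omega : ¬ (0:ℕ) < 0), if_pos rfl]
  have e0 := H.setExt_eq _ 0 _ (fun k => if k = m - 1 then y (m-1) else H.zero) hA0 hAj0
  have hW0 : H.f (fun l => z (0 + l)) = H.f (fun i => if i = m - 1 then H.zero else y i) := by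
    apply H.f_ext
    intro l hl
    simp only [hz, Nat.zero_add]
    by_cases hlm : l = m - 1
    · subst hlm
      rw [if_neg (by omega : ¬ m - 1 < m - 1), if_neg (by omega : ¬ m - 1 = 2*m - 2), if_pos rfl]
    · rw [if_pos (by omega : l < m - 1), if_neg hlm]
  have hupd0 : ∀ u : R, H.f (Function.update (fun k => if k = m - 1 then y (m-1) else H.zero)
      0 u) = H.f2 u (y (m-1)) := by
    intro u
    have hfix : ∀ i, m ≤ i → (Equiv.swap 1 (m-1)) i = i := by
      intro i hi
      exact Equiv.swap_apply_of_ne_of_ne (by omega) (by omega)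
    refine Eq.trans ?_ (H.f_comm (fun i => if i = 0 then u else if i = 1 then y (m-1)
      else H.zero) (Equiv.swap 1 (m-1)) hfix)
    apply H.f_ext
    intro i hi
    simp only [Function.comp]
    by_cases hi0 : i = 0
    · subst hi0
      rw [Function.update_self,
        Equiv.swap_apply_of_ne_of_ne (by omega : (0:ℕ) ≠ 1) (by omega : (0:ℕ) ≠ m - 1),
        if_pos rfl]
    · rw [Function.update_of_ne hi0]
      by_cases hi1 : i = 1
      · subst hi1
        rw [Equiv.swap_apply_left]
        by_cases h2 : (1:ℕ) = m - 1
        · rw [if_pos h2, if_neg (by omega : ¬ m - 1 = 0), if_pos h2.symm]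
        · rw [if_neg h2, if_neg (by omega : ¬ m - 1 = 0), if_neg (fun hh => h2 hh.symm)]
      · by_cases him : i = m - 1
        · subst him
          rw [Equiv.swap_apply_right, if_pos rfl, if_neg (by omega : ¬ (1:ℕ) = 0), if_pos rfl]
        · rw [Equiv.swap_apply_of_ne_of_ne hi1 him, if_neg him, if_neg hi0, if_neg hi1]
  have hside0 : setExt H.f (fun k => if k < 0 then {z k}
      else if k = 0 then H.f (fun l => z (0 + l)) else {z (k + m - 1)})
      = {v | ∃ w ∈ H.f (fun i => if i = m - 1 then H.zero else y i), v ∈ H.f2 w (y (m - 1))} := by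
    rw [e0, hW0]
    ext v
    simp only [Set.mem_setOf_eq]
    constructor
    · rintro ⟨u, hu, hv⟩
      exact ⟨u, hu, by rwa [hupd0] at hv⟩
    · rintro ⟨u, hu, hv⟩
      exact ⟨u, hu, by rwa [hupd0]⟩
  rw [← hside1, ← hside0]
  exact h

end KrasnerHyperring
namespace KrasnerHyperring

variable {R : Type u} {m n : ℕ} (H : KrasnerHyperring R m n)

def lsum (x : ℕ → R) : ℕ → Set R
  | 0 => {H.zero}
  | (k+1) => {v | ∃ w ∈ lsum x k, v ∈ H.f2 w (x k)}

lemma f_eq_lsum (x : ℕ → R) : H.f x = H.lsum x m := by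
  have hm := H.hm
  have main : ∀ (k : ℕ), k ≤ m → ∀ x : ℕ → R,
      H.f (fun i => if i < k then x i else H.zero) = H.lsum x k := by
    intro k
    induction k with
    | zero =>
      intro _ x
      simp only [lsum]
      refine Eq.trans (H.f_ext fun i hi => ?_) (H.f_zero H.zero)
      rw [if_neg (by omega : ¬ i < 0)]
      split_ifs <;> rfl
    | succ k ih =>
      intro hk x
      set y' : ℕ → R := fun i => if i = m - 1 then x k else if i < k then x i else H.zero
        with hy'
      have step1 : H.f (fun i => if i < k + 1 then x i else H.zero) = H.f y' := by
        by_cases hkm : k = m - 1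
        · apply H.f_ext
          intro i hi
          simp only [hy']
          by_cases him : i = m - 1
          · subst him; rw [if_pos (by omega : m - 1 < k + 1), if_pos rfl, hkm]
          · by_cases hik : i < k
            · rw [if_pos (by omega : i < k + 1), if_neg him, if_pos hik]
            · rw [if_neg (by omega : ¬ i < k + 1), if_neg him, if_neg hik]
        · have hfix : ∀ i, m ≤ i → (Equiv.swap k (m-1)) i = i := by
            intro i hi
            exact Equiv.swap_apply_of_ne_of_ne (by omega) (by omega)
          refine Eq.trans ?_ (H.f_comm y' (Equiv.swap k (m-1)) hfix)
          apply H.f_ext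
          intro i hi
          simp only [Function.comp, hy']
          by_cases hik : i = k
          · subst hik
            rw [Equiv.swap_apply_left, if_pos (by omega : i < i + 1), if_pos rfl]
          · by_cases him : i = m - 1
            · subst him
              rw [Equiv.swap_apply_right, if_neg (by omega : ¬ m - 1 < k + 1),
                if_neg hkm, if_neg (by omega : ¬ k < k)]
            · rw [Equiv.swap_apply_of_ne_of_ne hik him, if_neg him]
              by_cases hik2 : i < k
              · rw [if_pos (by omega : i < k + 1), if_pos hik2]
              · rw [if_neg (by omega : ¬ i < k + 1), if_neg hik2]
      rw [step1, H.split_last y']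
      have hy'm : y' (m-1) = x k := by simp [hy']
      have hinner : H.f (fun i => if i = m - 1 then H.zero else y' i)
          = H.lsum x k := by
        refine Eq.trans (H.f_ext fun i hi => ?_) (ih (by omega) x)
        by_cases him : i = m - 1
        · subst him; rw [if_pos rfl, if_neg (by omega : ¬ m - 1 < k)]
        · rw [if_neg him]
          simp only [hy']
          rw [if_neg him]
      rw [hy'm, hinner]
      simp only [lsum]
  refine Eq.trans (H.f_ext fun i hi => ?_) (main m le_rfl x)
  rw [if_pos hi]

lemma f2_assoc_sets (a b c : R) :
    {v | ∃ u ∈ H.f2 a b, v ∈ H.f2 u c} = {v | ∃ u ∈ H.f2 b c, v ∈ H.f2 a u} := by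
  have hm := H.hm
  set z : ℕ → R := fun k => if k = 0 then a else if k = 1 then b else if k = m then c
    else H.zero with hz
  have h := H.f_assoc z 0 1 H.hm0 H.hm1
  -- side 0
  have hA0 : ∀ k, k ≠ 0 →
      (if k < 0 then ({z k} : Set R) else if k = 0 then H.f (fun l => z (0 + l))
        else {z (k + m - 1)}) = {(fun k => if k = 1 then c else H.zero) k} := by
    intro k hk
    beta_reduce
    rw [if_neg (by omega : ¬ k < 0), if_neg hk]
    congr 1
    simp only [hz]
    by_cases hk1 : k = 1
    · subst hk1
      rw [if_neg (by omega : ¬ 1 + m - 1 = 0), if_neg (by omega : ¬ 1 + m - 1 = 1),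
        if_pos (by omega : 1 + m - 1 = m), if_pos rfl]
    · rw [if_neg (by omega : ¬ k + m - 1 = 0), if_neg (by omega : ¬ k + m - 1 = 1),
        if_neg (by omega : ¬ k + m - 1 = m), if_neg hk1]
  have hAj0 : (if (0:ℕ) < 0 then ({z 0} : Set R)
      else if (0:ℕ) = 0 then H.f (fun l => z (0 + l)) else {z (0 + m - 1)})
      = H.f (fun l => z (0 + l)) := by
    rw [if_neg (by omega : ¬ (0:ℕ) < 0), if_pos rfl]
  have e0 := H.setExt_eq _ 0 _ (fun k => if k = 1 then c else H.zero) hA0 hAj0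
  have hW0 : H.f (fun l => z (0 + l)) = H.f2 a b := by
    apply H.f_ext
    intro l hl
    simp only [hz, Nat.zero_add]
    by_cases hl0 : l = 0
    · rw [if_pos hl0, if_pos hl0]
    · rw [if_neg hl0, if_neg hl0]
      by_cases hl1 : l = 1
      · rw [if_pos hl1, if_pos hl1]
      · rw [if_neg hl1, if_neg hl1, if_neg (by omega : ¬ l = m)]
  have hupd0 : ∀ u : R, H.f (Function.update (fun k => if k = 1 then c else H.zero) 0 u)
      = H.f2 u c := by
    intro u
    apply H.f_ext
    intro i hi
    by_cases hi0 : i = 0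
    · subst hi0; rw [Function.update_self, if_pos rfl]
    · rw [Function.update_of_ne hi0, if_neg hi0]
  -- side 1
  have hA1 : ∀ k, k ≠ 1 →
      (if k < 1 then ({z k} : Set R) else if k = 1 then H.f (fun l => z (1 + l))
        else {z (k + m - 1)}) = {(fun k => if k = 0 then a else H.zero) k} := by
    intro k hk
    beta_reduce
    by_cases hk0 : k = 0
    · subst hk0
      rw [if_pos (by omega : (0:ℕ) < 1), if_pos rfl]
      simp [hz]
    · rw [if_neg (by omega : ¬ k < 1), if_neg hk, if_neg hk0]
      congr 1
      simp only [hz]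
      rw [if_neg (by omega : ¬ k + m - 1 = 0), if_neg (by omega : ¬ k + m - 1 = 1),
        if_neg (by omega : ¬ k + m - 1 = m)]
  have hAj1 : (if (1:ℕ) < 1 then ({z 1} : Set R)
      else if (1:ℕ) = 1 then H.f (fun l => z (1 + l)) else {z (1 + m - 1)})
      = H.f (fun l => z (1 + l)) := by
    rw [if_neg (by omega : ¬ (1:ℕ) < 1), if_pos rfl]
  have e1 := H.setExt_eq _ 1 _ (fun k => if k = 0 then a else H.zero) hA1 hAj1
  have hW1 : H.f (fun l => z (1 + l)) = H.f2 b c := by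
    have hfix : ∀ i, m ≤ i → (Equiv.swap 1 (m-1)) i = i := by
      intro i hi
      exact Equiv.swap_apply_of_ne_of_ne (by omega) (by omega)
    refine Eq.trans ?_ (H.f_comm (fun i => if i = 0 then b else if i = 1 then c else H.zero)
      (Equiv.swap 1 (m-1)) hfix)
    apply H.f_ext
    intro l hl
    simp only [Function.comp, hz]
    by_cases hl0 : l = 0
    · subst hl0
      rw [Equiv.swap_apply_of_ne_of_ne (by omega : (0:ℕ) ≠ 1) (by omega : (0:ℕ) ≠ m - 1),
        if_neg (by omega : ¬ (1:ℕ) + 0 = 0), if_pos (by omega : (1:ℕ) + 0 = 1), if_pos rfl]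
    · by_cases hlm : l = m - 1
      · subst hlm
        rw [Equiv.swap_apply_right, if_neg (by omega : ¬ 1 + (m-1) = 0),
          if_neg (by omega : ¬ 1 + (m-1) = 1), if_pos (by omega : 1 + (m-1) = m),
          if_neg (by omega : ¬ (1:ℕ) = 0), if_pos rfl]
      · by_cases hl1 : l = 1
        · subst hl1
          rw [Equiv.swap_apply_left, if_neg (by omega : ¬ (1:ℕ) + 1 = 0),
            if_neg (by omega : ¬ (1:ℕ) + 1 = 1), if_neg (by omega : ¬ (1:ℕ) + 1 = m),
            if_neg (by omega : ¬ m - 1 = 0), if_neg (by omega : ¬ m - 1 = 1)]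
        · rw [Equiv.swap_apply_of_ne_of_ne hl1 hlm, if_neg (by omega : ¬ 1 + l = 0),
            if_neg (by omega : ¬ 1 + l = 1), if_neg (by omega : ¬ 1 + l = m),
            if_neg hl0, if_neg hl1]
  have hupd1 : ∀ u : R, H.f (Function.update (fun k => if k = 0 then a else H.zero) 1 u)
      = H.f2 a u := by
    intro u
    apply H.f_ext
    intro i hi
    by_cases hi1 : i = 1
    · subst hi1; rw [Function.update_self, if_neg (by omega : ¬ (1:ℕ) = 0), if_pos rfl]
    · rw [Function.update_of_ne hi1, if_neg hi1]
  have goal0 : setExt H.f (fun k => if k < 0 then {z k}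
      else if k = 0 then H.f (fun l => z (0 + l)) else {z (k + m - 1)})
      = {v | ∃ u ∈ H.f2 a b, v ∈ H.f2 u c} := by
    rw [e0, hW0]
    ext v
    simp only [Set.mem_setOf_eq]
    constructor
    · rintro ⟨u, hu, hv⟩; exact ⟨u, hu, by rwa [hupd0] at hv⟩
    · rintro ⟨u, hu, hv⟩; exact ⟨u, hu, by rwa [hupd0]⟩
  have goal1 : setExt H.f (fun k => if k < 1 then {z k}
      else if k = 1 then H.f (fun l => z (1 + l)) else {z (k + m - 1)})
      = {v | ∃ u ∈ H.f2 b c, v ∈ H.f2 a u} := by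
    rw [e1, hW1]
    ext v
    simp only [Set.mem_setOf_eq]
    constructor
    · rintro ⟨u, hu, hv⟩; exact ⟨u, hu, by rwa [hupd1] at hv⟩
    · rintro ⟨u, hu, hv⟩; exact ⟨u, hu, by rwa [hupd1]⟩
  rw [← goal0, ← goal1]
  exact h

lemma asc1 {a u b c v : R} (h1 : v ∈ H.f2 a u) (h2 : u ∈ H.f2 b c) :
    ∃ w ∈ H.f2 a b, v ∈ H.f2 w c := by
  have h := H.f2_assoc_sets a b c
  have hv : v ∈ {v | ∃ u ∈ H.f2 b c, v ∈ H.f2 a u} := ⟨u, h2, h1⟩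
  rw [← h] at hv
  exact hv

lemma asc2 {a b c w v : R} (h1 : v ∈ H.f2 w c) (h2 : w ∈ H.f2 a b) :
    ∃ u ∈ H.f2 b c, v ∈ H.f2 a u := by
  have h := H.f2_assoc_sets a b c
  have hv : v ∈ {v | ∃ u ∈ H.f2 a b, v ∈ H.f2 u c} := ⟨w, h2, h1⟩
  rw [h] at hv
  exact hv

end KrasnerHyperring
section ACHelp
variable {M : Type u} [CommMonoid M]

lemma ach1 {e x y x' y' : M} (h : e * (x * y) = e * (x' * y')) :
    x * (e * y) = x' * (e * y') := by
  calc x * (e * y) = e * (x * y) := by ac_rfl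
    _ = e * (x' * y') := h
    _ = x' * (e * y') := by ac_rfl

lemma ach2 (e x y : M) : x * (e * y) = y * (e * x) := by ac_rfl

lemma ach3 {u u' E y y' : M} (h : u * (E * y) = u' * (E * y')) :
    E * (u * y) = E * (u' * y') := by
  calc E * (u * y) = u * (E * y) := by ac_rfl
    _ = u' * (E * y') := h
    _ = E * (u' * y') := by ac_rfl

end ACHelp

namespace KrasnerHyperring

variable {R : Type u} {m n : ℕ} (H : KrasnerHyperring R m n) {S : Set R}

lemma fracRel_iff (p q : R × ↥S) :
    H.FracRel S p q ↔ ∃ c ∈ S, H.g2 c (H.g2 p.1 (q.2 : R)) = H.g2 c (H.g2 q.1 (p.2 : R)) := by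
  constructor
  · rintro ⟨t, ht, u, hu, h0⟩
    have hu' : u ∈ H.f2 (H.g2 p.1 (q.2 : R)) (H.neg (H.g2 q.1 (p.2 : R))) := hu
    have h2 := H.f2_scal_mem hu' t
    rw [H.neg_g2] at h2
    have h0' : H.g2 u t = H.zero := by rw [H.g2_comm]; exact h0
    rw [h0'] at h2
    have h3 := H.neg_unique2 h2
    have h4 : H.g2 (H.g2 q.1 (p.2 : R)) t = H.g2 (H.g2 p.1 (q.2 : R)) t := by
      rw [← H.neg_neg (H.g2 (H.g2 q.1 (p.2 : R)) t), h3, H.neg_neg]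
    refine ⟨t, ht, ?_⟩
    rw [H.g2_comm t, H.g2_comm t, h4]
  · rintro ⟨c, hc, he⟩
    have heq : H.g2 (H.g2 q.1 (p.2 : R)) c = H.g2 (H.g2 p.1 (q.2 : R)) c := by
      rw [H.g2_comm _ c, H.g2_comm _ c, he]
    have h0 : H.zero ∈ H.f2 (H.g2 (H.g2 p.1 (q.2 : R)) c)
        (H.g2 (H.neg (H.g2 q.1 (p.2 : R))) c) := by
      rw [H.neg_g2, heq]
      exact H.neg_mem2 _
    obtain ⟨w, hw, hval⟩ := H.f2_scal_rev c h0
    exact ⟨c, hc, w, hw, by rw [H.g2_comm]; exact hval.symm⟩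

lemma fracRel_equiv (hS : H.IsMultSubset S) (h1 : H.one ∈ S) :
    Equivalence (H.FracRel S) := by
  constructor
  · intro p
    rw [H.fracRel_iff]
    exact ⟨H.one, h1, rfl⟩
  · intro p q h
    rw [H.fracRel_iff] at *
    obtain ⟨c, hc, he⟩ := h
    exact ⟨c, hc, he.symm⟩
  · intro p q r h h'
    rw [H.fracRel_iff] at *
    obtain ⟨c₁, hc₁, e₁⟩ := h
    obtain ⟨c₂, hc₂, e₂⟩ := h'
    refine ⟨H.g2 c₁ (H.g2 c₂ (q.2 : R)), H.g2_mem hS h1 hc₁ (H.g2_mem hS h1 hc₂ q.2.2), ?_⟩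
    letI : CommMonoid R := H.cm
    have e₁' : c₁ * (p.1 * (q.2 : R)) = c₁ * (q.1 * (p.2 : R)) := e₁
    have e₂' : c₂ * (q.1 * (r.2 : R)) = c₂ * (r.1 * (q.2 : R)) := e₂
    show c₁ * (c₂ * (q.2 : R)) * (p.1 * (r.2 : R)) = c₁ * (c₂ * (q.2 : R)) * (r.1 * (p.2 : R))
    calc c₁ * (c₂ * (q.2 : R)) * (p.1 * (r.2 : R))
        = (c₂ * (r.2 : R)) * (c₁ * (p.1 * (q.2 : R))) := by ac_rfl
      _ = (c₂ * (r.2 : R)) * (c₁ * (q.1 * (p.2 : R))) := by rw [e₁']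
      _ = (c₁ * (p.2 : R)) * (c₂ * (q.1 * (r.2 : R))) := by ac_rfl
      _ = (c₁ * (p.2 : R)) * (c₂ * (r.1 * (q.2 : R))) := by rw [e₂']
      _ = c₁ * (c₂ * (q.2 : R)) * (r.1 * (p.2 : R)) := by ac_rfl

lemma mk_eq_iff (hS : H.IsMultSubset S) (h1 : H.one ∈ S) {r s r' s' : R}
    (hs : s ∈ S) (hs' : s' ∈ S) :
    H.mkFrac S r s hs = H.mkFrac S r' s' hs' ↔
      ∃ c ∈ S, H.g2 c (H.g2 r s') = H.g2 c (H.g2 r' s) := by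
  constructor
  · intro h
    have h2 : Relation.EqvGen (H.FracRel S) (r, ⟨s, hs⟩) (r', ⟨s', hs'⟩) :=
      Quot.eqvGen_exact h
    have h3 := ((H.fracRel_equiv hS h1).eqvGen_iff).mp h2
    exact (H.fracRel_iff _ _).mp h3
  · intro h
    exact Quot.sound ((H.fracRel_iff (r, ⟨s, hs⟩) (r', ⟨s', hs'⟩)).mpr h)

lemma mk_out (q : KrasnerHyperring.Frac H S) :
    H.mkFrac S (Quot.out q).1 ((Quot.out q).2 : R) (Quot.out q).2.2 = q :=
  Quot.out_eq q

lemma fracG_mk (hS : H.IsMultSubset S) (h1 : H.one ∈ S) (x : ℕ → KrasnerHyperring.Frac H S)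
    (a s : ℕ → R) (hs : ∀ i, s i ∈ S) (hx : ∀ i, x i = H.mkFrac S (a i) (s i) (hs i)) :
    H.fracG hS x = H.mkFrac S (H.g a) (H.g s) (hS s (fun i _ => hs i)) := by
  have hrel : ∀ i, ∃ c ∈ S,
      H.g2 c (H.g2 ((x i).out).1 (s i)) = H.g2 c (H.g2 (a i) (((x i).out).2 : R)) := by
    intro i
    have h : H.mkFrac S ((x i).out).1 (((x i).out).2 : R) ((x i).out).2.2
        = H.mkFrac S (a i) (s i) (hs i) := (H.mk_out (x i)).trans (hx i)
    exact (H.mk_eq_iff hS h1 _ _).mp h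
  choose c hcS hce using hrel
  have key : ∀ u v : ℕ → R, H.gpr (fun i => H.g2 (c i) (H.g2 (u i) (v i))) n
      = H.g2 (H.gpr c n) (H.g2 (H.gpr u n) (H.gpr v n)) := by
    intro u v
    rw [show (fun i => H.g2 (c i) (H.g2 (u i) (v i)))
      = (fun i => H.g2 (c i) ((fun j => H.g2 (u j) (v j)) i)) from rfl,
      H.gpr_mul n c (fun j => H.g2 (u j) (v j)), H.gpr_mul n u v]
  have main : H.mkFrac S (H.g (fun i => ((x i).out).1)) (H.g (fun i => (((x i).out).2 : R)))
      (hS _ (fun i _ => ((x i).out).2.2))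
      = H.mkFrac S (H.g a) (H.g s) (hS s (fun i _ => hs i)) := by
    rw [H.mk_eq_iff hS h1]
    refine ⟨H.gpr c n, H.gpr_mem hS h1 n c (fun i _ => hcS i), ?_⟩
    rw [H.g_eq_gpr a, H.g_eq_gpr s, H.g_eq_gpr (fun i => ((x i).out).1),
      H.g_eq_gpr (fun i => (((x i).out).2 : R)), ← key, ← key]
    exact H.gpr_congr n _ _ (fun i _ => hce i)
  exact main

/-- The numerator family of the hypersum with representatives `(a, s)`. -/
def numFam (a s : ℕ → R) : ℕ → R :=
  fun k => H.g (fun j => if j = k then a k else if j < m then s j else H.one)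

/-- The common denominator of the hypersum with denominators `s`. -/
def denTerm (s : ℕ → R) : R := H.g (fun j => if j < m then s j else H.one)

lemma denTerm_mem (hS : H.IsMultSubset S) (h1 : H.one ∈ S) {s : ℕ → R}
    (hs : ∀ i, s i ∈ S) : H.denTerm s ∈ S := by
  refine hS _ (fun j _ => ?_)
  by_cases h : j < m
  · rw [if_pos h]; exact hs j
  · rw [if_neg h]; exact h1

lemma fracSum_sub (hS : H.IsMultSubset S) (h1 : H.one ∈ S) (a s a' s' : ℕ → R)
    (hs : ∀ i, s i ∈ S) (hs' : ∀ i, s' i ∈ S)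
    (hrel : ∀ i, ∃ c ∈ S, H.g2 c (H.g2 (a i) (s' i)) = H.g2 c (H.g2 (a' i) (s i))) :
    ∀ q : KrasnerHyperring.Frac H S,
      (∃ u ∈ H.f (H.numFam a s), q = H.mkFrac S u (H.denTerm s) (H.denTerm_mem hS h1 hs)) →
      (∃ u' ∈ H.f (H.numFam a' s'),
        q = H.mkFrac S u' (H.denTerm s') (H.denTerm_mem hS h1 hs')) := by
  choose e heS hee using hrel
  set E : R := H.gpr (fun j => if j < m then e j else H.one) n with hE
  have hES : E ∈ S := by
    rw [hE]
    refine H.gpr_mem hS h1 n _ (fun j _ => ?_)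
    by_cases h : j < m
    · rw [if_pos h]; exact heS j
    · rw [if_neg h]; exact h1
  rintro q ⟨u, hu, rfl⟩
  have conv : ∀ (A B C : ℕ → R) (k : ℕ),
      H.g2 (H.numFam A B k) (H.g2 E (H.denTerm C)) =
      H.gpr (fun j => H.g2 (if j = k then A k else if j < m then B j else H.one)
        (H.g2 (if j < m then e j else H.one) (if j < m then C j else H.one))) n := by
    intro A B C k
    rw [numFam, denTerm, H.g_eq_gpr, H.g_eq_gpr, hE,
      show (fun j => H.g2 (if j = k then A k else if j < m then B j else H.one)
          (H.g2 (if j < m then e j else H.one) (if j < m then C j else H.one)))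
        = (fun j => H.g2 ((fun j' => if j' = k then A k else if j' < m then B j' else H.one) j)
          ((fun j' => H.g2 ((fun i => if i < m then e i else H.one) j')
            ((fun i => if i < m then C i else H.one) j')) j)) from rfl,
      H.gpr_mul, H.gpr_mul]
  have hmem : H.g2 u (H.g2 E (H.denTerm s')) ∈
      H.f (fun k => H.g2 (H.numFam a s k) (H.g2 E (H.denTerm s'))) := by
    rw [← H.scal_set]
    exact ⟨u, hu, rfl⟩
  have hfeq : H.f (fun k => H.g2 (H.numFam a s k) (H.g2 E (H.denTerm s')))
      = H.f (fun k => H.g2 (H.numFam a' s' k) (H.g2 E (H.denTerm s))) := by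
    apply H.f_ext
    intro k hk
    rw [conv a s s' k, conv a' s' s k]
    apply H.gpr_congr
    intro j hj
    letI : CommMonoid R := H.cm
    by_cases hjm : j < m
    · by_cases hjk : j = k
      · subst hjk
        simp only [if_pos rfl, if_pos hjm]
        exact ach1 (hee j)
      · simp only [if_neg hjk, if_pos hjm]
        exact ach2 (e j) (s j) (s' j)
    · simp only [if_neg (by omega : ¬ j = k), if_neg hjm]
  rw [hfeq] at hmem
  rw [← H.scal_set (H.numFam a' s') (H.g2 E (H.denTerm s))] at hmem
  obtain ⟨u', hu', he'⟩ := hmem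
  refine ⟨u', hu', ?_⟩
  rw [H.mk_eq_iff hS h1]
  refine ⟨E, hES, ?_⟩
  letI : CommMonoid R := H.cm
  exact ach3 he'

lemma fracF_mk (hS : H.IsMultSubset S) (h1 : H.one ∈ S) (x : ℕ → KrasnerHyperring.Frac H S)
    (a s : ℕ → R) (hs : ∀ i, s i ∈ S) (hx : ∀ i, x i = H.mkFrac S (a i) (s i) (hs i)) :
    H.fracF hS h1 x = {q | ∃ u ∈ H.f (H.numFam a s),
      q = H.mkFrac S u (H.denTerm s) (H.denTerm_mem hS h1 hs)} := by
  have hrel : ∀ i, ∃ c ∈ S, H.g2 c (H.g2 ((x i).out).1 (s i))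
      = H.g2 c (H.g2 (a i) (((x i).out).2 : R)) := by
    intro i
    have h : H.mkFrac S ((x i).out).1 (((x i).out).2 : R) ((x i).out).2.2
        = H.mkFrac S (a i) (s i) (hs i) := (H.mk_out (x i)).trans (hx i)
    exact (H.mk_eq_iff hS h1 _ _).mp h
  have hrel' : ∀ i, ∃ c ∈ S, H.g2 c (H.g2 (a i) (((x i).out).2 : R))
      = H.g2 c (H.g2 ((x i).out).1 (s i)) := by
    intro i
    obtain ⟨c, hc, he⟩ := hrel i
    exact ⟨c, hc, he.symm⟩
  have hout : ∀ i, (((x i).out).2 : R) ∈ S := fun i => ((x i).out).2.2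
  have hsub1 := H.fracSum_sub hS h1 (fun i => ((x i).out).1) (fun i => (((x i).out).2 : R))
    a s hout hs hrel
  have hsub2 := H.fracSum_sub hS h1 a s (fun i => ((x i).out).1)
    (fun i => (((x i).out).2 : R)) hs hout hrel'
  have hF : H.fracF hS h1 x = {q | ∃ u ∈ H.f (H.numFam (fun i => ((x i).out).1)
      (fun i => (((x i).out).2 : R))), q = H.mkFrac S u
      (H.denTerm (fun i => (((x i).out).2 : R))) (H.denTerm_mem hS h1 hout)} := rfl
  rw [hF]
  ext q
  constructor
  · intro hq
    exact hsub1 q hq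
  · intro hq
    exact hsub2 q hq

end KrasnerHyperring
namespace KrasnerHyperring

variable {R : Type u} {m n : ℕ} (H : KrasnerHyperring R m n) {S : Set R}

/-- iterated "add a `1`" operation on subsets. -/
def addOnes : ℕ → Set R → Set R
  | 0, A => A
  | (k+1), A => {v | ∃ w ∈ addOnes k A, v ∈ H.f2 w H.one}

lemma addOnes_succ (k : ℕ) (A : Set R) :
    H.addOnes (k+1) A = {v | ∃ w ∈ H.addOnes k A, v ∈ H.f2 w H.one} := rfl

lemma addOnes_sub {A A' : Set R} (h : A ⊆ A') : ∀ k, H.addOnes k A ⊆ H.addOnes k A' := by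
  intro k
  induction k with
  | zero => exact h
  | succ k ih =>
    rintro v ⟨w, hw, hv⟩
    exact ⟨w, ih hw, hv⟩

lemma addOnes_nonempty {A : Set R} (h : A.Nonempty) (k : ℕ) : (H.addOnes k A).Nonempty := by
  induction k with
  | zero => exact h
  | succ k ih =>
    obtain ⟨w, hw⟩ := ih
    obtain ⟨v, hv⟩ := H.f2_nonempty w H.one
    exact ⟨v, w, hw, hv⟩

lemma addOnes_link (v : R) : ∀ k, H.addOnes k {v}
    = {u | ∃ τ ∈ H.addOnes k {H.zero}, u ∈ H.f2 v τ} := by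
  intro k
  induction k with
  | zero =>
    ext u
    simp only [addOnes, Set.mem_setOf_eq, Set.mem_singleton_iff]
    constructor
    · rintro rfl
      exact ⟨H.zero, rfl, by rw [H.f2_zero_right]; rfl⟩
    · rintro ⟨τ, rfl, hu⟩
      rw [H.f2_zero_right] at hu
      exact hu
  | succ k ih =>
    ext q
    simp only [addOnes_succ, Set.mem_setOf_eq]
    constructor
    · rintro ⟨u, hu, hq⟩
      rw [ih] at hu
      obtain ⟨τ, hτ, huv⟩ := hu
      obtain ⟨σ, hσ, hqv⟩ := H.asc2 hq huv
      exact ⟨σ, ⟨τ, hτ, hσ⟩, hqv⟩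
    · rintro ⟨σ, ⟨τ, hτ, hσ⟩, hq⟩
      obtain ⟨w, hw, hqw⟩ := H.asc1 hq hσ
      exact ⟨w, by rw [ih]; exact ⟨τ, hτ, hw⟩, hqw⟩

end KrasnerHyperring
namespace KrasnerHyperring

variable {R : Type u} {m n : ℕ} (H : KrasnerHyperring R m n)

/-- The contraction of a hyperideal of `S⁻¹R`. -/
def extB (S : Set R) (J : Set (KrasnerHyperring.Frac H S)) : Set R :=
  {r : R | ∃ s, ∃ hs : s ∈ S, H.mkFrac S r s hs ∈ J}

variable {S : Set R}

lemma zero_mem_extB {hS : H.IsMultSubset S} (h1 : H.one ∈ S)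
    {J : Set (KrasnerHyperring.Frac H S)} (hJ : H.IsFracHyperideal hS h1 J) :
    H.zero ∈ H.extB S J := ⟨H.one, h1, hJ.1⟩

lemma memB_iff (hS : H.IsMultSubset S) (h1 : H.one ∈ S)
    {J : Set (KrasnerHyperring.Frac H S)} (hJ : H.IsFracHyperideal hS h1 J) {r : R} : r ∈ H.extB S J ↔ H.mkFrac S r H.one h1 ∈ J := by
  constructor
  · rintro ⟨s, hsS, hJs⟩
    set A : ℕ → R := fun j => if j = 0 then r else if j = 1 then s else H.one with hA
    set Sg : ℕ → R := fun j => if j = 0 then s else H.one with hSg0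
    have hSg : ∀ j, Sg j ∈ S := by
      intro j
      simp only [hSg0]
      by_cases h : j = 0
      · rw [if_pos h]; exact hsS
      · rw [if_neg h]; exact h1
    set y : ℕ → KrasnerHyperring.Frac H S := fun j => H.mkFrac S (A j) (Sg j) (hSg j) with hy
    have hy0 : y 0 ∈ J := hJs
    have hG := hJ.2.2.2 y 0 H.hn0 hy0
    rw [H.fracG_mk hS h1 y A Sg hSg (fun i => rfl)] at hG
    have heq : H.mkFrac S (H.g A) (H.g Sg) (hS Sg (fun i _ => hSg i))
        = H.mkFrac S r H.one h1 := by
      rw [H.mk_eq_iff hS h1]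
      refine ⟨H.one, h1, ?_⟩
      have e1 : H.g A = H.g2 r s := rfl
      have e2 : H.g Sg = s := H.g_one s
      rw [e1, e2, H.g2_one_right]
    rw [heq] at hG
    exact hG
  · intro h
    exact ⟨H.one, h1, h⟩

lemma extB_law (hS : H.IsMultSubset S) (h1 : H.one ∈ S)
    {J : Set (KrasnerHyperring.Frac H S)} (hJ : H.IsFracHyperideal hS h1 J)
    {X Y : R} (hX : X ∈ H.extB S J) (hY : Y ∈ H.extB S J) :
    ∀ v ∈ H.f (fun k => if k = 0 then X else if k = 1 then Y
      else if k < n then H.zero else H.one), v ∈ H.extB S J := by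
  set A : ℕ → R := fun j => if j = 0 then X else if j = 1 then Y else H.zero with hA
  set y : ℕ → KrasnerHyperring.Frac H S := fun j => H.mkFrac S (A j) H.one h1 with hy
  have hyJ : ∀ i, i < m → y i ∈ J := by
    intro i _
    show H.mkFrac S (A i) H.one h1 ∈ J
    by_cases h0 : i = 0
    · subst h0
      exact (H.memB_iff hS h1 hJ).mp hX
    · by_cases hb : i = 1
      · subst hb
        exact (H.memB_iff hS h1 hJ).mp hY
      · have hAi : A i = H.zero := by simp only [hA]; rw [if_neg h0, if_neg hb]
        rw [hAi]
        exact hJ.1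
  have hsum := hJ.2.1 y hyJ
  rw [H.fracF_mk hS h1 y A (fun _ => H.one) (fun _ => h1) (fun i => rfl)] at hsum
  have hnum : H.f (H.numFam A (fun _ => H.one)) = H.f (fun k => if k = 0 then X
      else if k = 1 then Y else if k < n then H.zero else H.one) := by
    apply H.f_ext
    intro k hk
    have e : H.numFam A (fun _ => H.one) k = if k < n then A k else H.one := by
      rw [numFam]
      refine Eq.trans (H.g_ext fun j hj => ?_) (H.g_single k (A k))
      by_cases h : j = k
      · rw [if_pos h, if_pos h]
      · rw [if_neg h, if_neg h]
        split_ifs <;> rfl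
    rw [e, hA]
    beta_reduce
    by_cases h0 : k = 0
    · subst h0
      rw [if_pos H.hn0, if_pos rfl, if_pos rfl]
    · by_cases hb : k = 1
      · subst hb
        rw [if_pos H.hn1, if_pos rfl, if_neg h0, if_neg h0, if_pos rfl]
      · rw [if_neg h0, if_neg hb, if_neg h0, if_neg hb]
  intro v hv
  have hvmem : H.mkFrac S v (H.denTerm (fun _ => H.one))
      (H.denTerm_mem hS h1 (fun _ => h1)) ∈ J := by
    apply hsum
    refine ⟨v, ?_, rfl⟩
    rw [hnum]
    exact hv
  exact ⟨_, _, hvmem⟩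

lemma extB_neg (hS : H.IsMultSubset S) (h1 : H.one ∈ S)
    {J : Set (KrasnerHyperring.Frac H S)} (hJ : H.IsFracHyperideal hS h1 J)
    {r : R} (hr : r ∈ H.extB S J) : H.neg r ∈ H.extB S J := by
  have hr1 := (H.memB_iff hS h1 hJ).mp hr
  have hneg := hJ.2.2.1 _ hr1
  have heq : H.fracNeg (H.mkFrac S r H.one h1) = H.mkFrac S (H.neg r) H.one h1 := by
    obtain ⟨c, hc, he⟩ := (H.mk_eq_iff hS h1 _ _).mp (H.mk_out (H.mkFrac S r H.one h1))
    have goal : H.mkFrac S (H.neg ((H.mkFrac S r H.one h1).out).1)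
        (((H.mkFrac S r H.one h1).out).2 : R) ((H.mkFrac S r H.one h1).out).2.2
        = H.mkFrac S (H.neg r) H.one h1 := by
      rw [H.mk_eq_iff hS h1]
      refine ⟨c, hc, ?_⟩
      have nright : ∀ p q : R, H.g2 p (H.neg q) = H.neg (H.g2 p q) := fun p q => by
        rw [H.g2_comm, H.neg_g2, H.g2_comm]
      rw [H.neg_g2, nright, H.neg_g2, nright]
      exact congrArg H.neg he
    exact goal
  rw [heq] at hneg
  exact ⟨H.one, h1, hneg⟩

lemma extB_g (hS : H.IsMultSubset S) (h1 : H.one ∈ S)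
    {J : Set (KrasnerHyperring.Frac H S)} (hJ : H.IsFracHyperideal hS h1 J)
    (x : ℕ → R) (i : ℕ) (hi : i < n) (hx : x i ∈ H.extB S J) :
    H.g x ∈ H.extB S J := by
  set y : ℕ → KrasnerHyperring.Frac H S := fun j => H.mkFrac S (x j) H.one h1 with hy
  have hyi : y i ∈ J := (H.memB_iff hS h1 hJ).mp hx
  have hG := hJ.2.2.2 y i hi hyi
  rw [H.fracG_mk hS h1 y x (fun _ => H.one) (fun _ => h1) (fun j => rfl)] at hG
  exact ⟨H.g (fun _ => H.one), hS _ (fun j _ => h1), hG⟩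

lemma lawSet_eq (X Y : R) : H.f (fun k => if k = 0 then X else if k = 1 then Y
    else if k < n then H.zero else H.one) = H.addOnes (m - n) (H.f2 X Y) := by
  have hm := H.hm
  have hn := H.hn
  set F : ℕ → R := fun k => if k = 0 then X else if k = 1 then Y
    else if k < n then H.zero else H.one with hF
  have l1 : H.lsum F 1 = {X} := by
    have h0 : H.lsum F 1 = {v | ∃ w ∈ H.lsum F 0, v ∈ H.f2 w (F 0)} := rfl
    rw [h0]
    ext v
    simp only [lsum, Set.mem_setOf_eq, Set.mem_singleton_iff]
    constructor
    · rintro ⟨w, rfl, hv⟩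
      rw [show F 0 = X from rfl, H.f2_zero_left] at hv
      exact hv
    · intro hv
      refine ⟨H.zero, rfl, ?_⟩
      rw [show F 0 = X from rfl, H.f2_zero_left]
      exact hv
  have l2 : H.lsum F 2 = H.f2 X Y := by
    have h0 : H.lsum F 2 = {v | ∃ w ∈ H.lsum F 1, v ∈ H.f2 w (F 1)} := rfl
    rw [h0, l1, show F 1 = Y from rfl]
    ext v
    simp only [Set.mem_setOf_eq, Set.mem_singleton_iff]
    constructor
    · rintro ⟨w, rfl, hv⟩
      exact hv
    · intro hv
      exact ⟨X, rfl, hv⟩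
  have stageA : ∀ k, 2 ≤ k → k ≤ n → H.lsum F k = H.f2 X Y := by
    intro k
    induction k with
    | zero => intro h _; omega
    | succ k ih =>
      intro h2 hkn
      by_cases hk1 : k = 1
      · subst hk1
        exact l2
      · have hk2 : 2 ≤ k := by omega
        have hstep : H.lsum F (k+1) = {v | ∃ w ∈ H.lsum F k, v ∈ H.f2 w (F k)} := rfl
        rw [hstep, ih hk2 (by omega)]
        have hFk : F k = H.zero := by
          rw [hF]
          beta_reduce
          rw [if_neg (by omega : ¬ k = 0), if_neg hk1, if_pos (by omega : k < n)]
        rw [hFk]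
        ext v
        simp only [Set.mem_setOf_eq]
        constructor
        · rintro ⟨w, hw, hv⟩
          rw [H.f2_zero_right] at hv
          rwa [hv]
        · intro hv
          exact ⟨v, hv, by rw [H.f2_zero_right]; rfl⟩
  by_cases hmn : m ≤ n
  · rw [H.f_eq_lsum, stageA m hm hmn, show m - n = 0 from by omega]
    rfl
  · have stageB : ∀ j, n + j ≤ m → H.lsum F (n + j) = H.addOnes j (H.f2 X Y) := by
      intro j
      induction j with
      | zero => intro _; exact stageA n hn le_rfl
      | succ j ih =>
        intro hj
        have hstep : H.lsum F (n + j + 1) = {v | ∃ w ∈ H.lsum F (n + j), v ∈ H.f2 w (F (n + j))} := rfl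
        rw [show n + (j + 1) = n + j + 1 from rfl, hstep, ih (by omega)]
        have hFk : F (n + j) = H.one := by
          rw [hF]
          beta_reduce
          rw [if_neg (by omega : ¬ n + j = 0), if_neg (by omega : ¬ n + j = 1),
            if_neg (by omega : ¬ n + j < n)]
        rw [hFk, H.addOnes_succ]
    have harg : m = n + (m - n) := by omega
    exact (H.f_eq_lsum F).trans ((congrArg (H.lsum F) harg).trans (stageB (m - n) (by omega)))

lemma extB_f2 (hS : H.IsMultSubset S) (h1 : H.one ∈ S)
    {J : Set (KrasnerHyperring.Frac H S)} (hJ : H.IsFracHyperideal hS h1 J)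
    {X Y : R} (hX : X ∈ H.extB S J) (hY : Y ∈ H.extB S J) :
    H.f2 X Y ⊆ H.extB S J := by
  intro v hv
  have law : ∀ X' Y', X' ∈ H.extB S J → Y' ∈ H.extB S J →
      H.addOnes (m - n) (H.f2 X' Y') ⊆ H.extB S J := by
    intro X' Y' hX' hY'
    rw [← H.lawSet_eq X' Y']
    exact H.extB_law hS h1 hJ hX' hY'
  have h0B : H.zero ∈ H.extB S J := H.zero_mem_extB h1 hJ
  set t := m - n with ht
  obtain ⟨τ, hτ⟩ := H.addOnes_nonempty (A := {H.zero}) ⟨H.zero, rfl⟩ t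
  have hτB : τ ∈ H.extB S J := by
    apply law H.zero H.zero h0B h0B
    rw [H.f2_zero_right]
    exact hτ
  obtain ⟨u₁, hu₁f⟩ := H.f2_nonempty v τ
  have hu₁B : u₁ ∈ H.extB S J := by
    apply law X Y hX hY
    apply H.addOnes_sub (Set.singleton_subset_iff.mpr hv) t
    rw [H.addOnes_link]
    exact ⟨τ, hτ, hu₁f⟩
  obtain ⟨σ, hσf⟩ := H.f2_nonempty τ τ
  have hσB : σ ∈ H.extB S J := by
    apply law τ H.zero hτB h0B
    rw [H.f2_zero_right]
    rw [H.addOnes_link]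
    exact ⟨τ, hτ, hσf⟩
  have hnegσB := H.extB_neg hS h1 hJ hσB
  have h1v : v ∈ H.f2 u₁ (H.neg τ) := H.rev2 hu₁f
  have h2' : τ ∈ H.f2 σ (H.neg τ) := H.rev2 hσf
  have h3' : τ ∈ H.f2 (H.neg τ) σ := by rwa [H.f2_comm] at h2'
  have h4' : H.neg τ ∈ H.f2 τ (H.neg σ) := H.rev2 h3'
  have h5' : H.neg τ ∈ H.f2 (H.neg σ) τ := by rwa [H.f2_comm] at h4'
  obtain ⟨w, hw, hvw⟩ := H.asc1 h1v h5'
  apply law u₁ (H.neg σ) hu₁B hnegσB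
  apply H.addOnes_sub (Set.singleton_subset_iff.mpr hw) t
  rw [H.addOnes_link]
  exact ⟨τ, hτ, hvw⟩

lemma extB_f (hS : H.IsMultSubset S) (h1 : H.one ∈ S)
    {J : Set (KrasnerHyperring.Frac H S)} (hJ : H.IsFracHyperideal hS h1 J)
    (x : ℕ → R) (hx : ∀ i, i < m → x i ∈ H.extB S J) :
    H.f x ⊆ H.extB S J := by
  rw [H.f_eq_lsum]
  have main : ∀ k, k ≤ m → H.lsum x k ⊆ H.extB S J := by
    intro k
    induction k with
    | zero =>
      intro _ v hv
      rw [show H.lsum x 0 = {H.zero} from rfl, Set.mem_singleton_iff] at hv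
      rw [hv]
      exact H.zero_mem_extB h1 hJ
    | succ k ih =>
      intro hk
      rintro v ⟨w, hw, hv⟩
      exact H.extB_f2 hS h1 hJ (ih (by omega) hw) (hx k (by omega)) hv
  exact main m le_rfl

lemma locIdeal_extB (hS : H.IsMultSubset S) (h1 : H.one ∈ S)
    {J : Set (KrasnerHyperring.Frac H S)} (hJ : H.IsFracHyperideal hS h1 J) :
    H.locIdeal S (H.extB S J) = J := by
  ext q
  constructor
  · rintro ⟨a, haB, s, hsS, rfl⟩
    have ha1 := (H.memB_iff hS h1 hJ).mp haB
    set A : ℕ → R := fun j => if j = 0 then a else H.one with hA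
    set Sg : ℕ → R := fun j => if j = 1 then s else H.one with hSg0
    have hSg : ∀ j, Sg j ∈ S := by
      intro j
      simp only [hSg0]
      by_cases h : j = 1
      · rw [if_pos h]; exact hsS
      · rw [if_neg h]; exact h1
    set y : ℕ → KrasnerHyperring.Frac H S := fun j => H.mkFrac S (A j) (Sg j) (hSg j) with hy
    have hy0 : y 0 ∈ J := ha1
    have hG := hJ.2.2.2 y 0 H.hn0 hy0
    rw [H.fracG_mk hS h1 y A Sg hSg (fun i => rfl)] at hG
    have heq : H.mkFrac S (H.g A) (H.g Sg) (hS Sg (fun i _ => hSg i))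
        = H.mkFrac S a s hsS := by
      rw [H.mk_eq_iff hS h1]
      refine ⟨H.one, h1, ?_⟩
      have e1 : H.g A = a := H.g_one a
      have e2 : H.g Sg = s := by
        rw [show H.g Sg = if 1 < n then s else H.one from H.g_single 1 s, if_pos H.hn1]
      rw [e1, e2]
    rw [heq] at hG
    exact hG
  · intro hq
    refine ⟨(Quot.out q).1, ⟨((Quot.out q).2 : R), (Quot.out q).2.2, ?_⟩,
      ((Quot.out q).2 : R), (Quot.out q).2.2, (H.mk_out q).symm⟩
    rw [H.mk_out q]
    exact hq

end KrasnerHyperring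

/-- every hyperideal `J` of `S⁻¹R` is extended: with
`B = {r ∈ R : ∃ s ∈ S, r/s ∈ J}`, `B` is a hyperideal of `R` and `S⁻¹B = J`. -/
theorem frac_ideal_extended {R : Type u} {m n : ℕ} (H : KrasnerHyperring R m n) (S : Set R)
    (hS : H.IsMultSubset S) (h1 : H.one ∈ S) (J : Set (KrasnerHyperring.Frac H S))
    (hJ : H.IsFracHyperideal hS h1 J) :
    H.IsHyperideal {r : R | ∃ s, ∃ hs : s ∈ S, H.mkFrac S r s hs ∈ J} ∧
      H.locIdeal S {r : R | ∃ s, ∃ hs : s ∈ S, H.mkFrac S r s hs ∈ J} = J := by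
  refine ⟨⟨H.zero_mem_extB h1 hJ, ?_, ?_, ?_⟩, H.locIdeal_extB hS h1 hJ⟩
  · exact fun x hx => H.extB_f hS h1 hJ x hx
  · exact fun a ha => H.extB_neg hS h1 hJ ha
  · exact fun x i hi hx => H.extB_g hS h1 hJ x i hi hx
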